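/- Let K ≥ 2 and p₁, p₂, p₃ ∈ (0,1) satisfy p₁ > p₂, p₁ > p₃, and (p₂ p₃ (K-1))/((1-p₂)(1-p₃)) > p₁/(1-p₁). Then the correctness probability of the three-model ensemble under maximum-likelihood aggregation is PA({l₁,l₂,l₃}) = p₁ - p₁(1-p₂)(1-p₃)/(K-1) + (1-p₁)p₂p₃, and this quantity is strictly greater than p₁. -/

import Mathlib

open Finset
open scoped Classical

/-- Probability that a model with success probability `p` predicts class `c`
when the ground truth is `q`: `p` if `c = q`, and `(1-p)/(K-1)` otherwise. -/
noncomputable def wgt (K : ℕ) (q : Fin K) (p : ℝ) (c : Fin K) : ℝ :=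
  if c = q then p else (1 - p) / ((K : ℝ) - 1)

/-- Belief of class `d` under observation `φ` for models with success probabilities `p`. -/
noncomputable def blf {n K : ℕ} (p : Fin n → ℝ) (φ : Fin n → Fin K) (d : Fin K) : ℝ :=
  ∏ i, if φ i = d then p i * ((K : ℝ) - 1) / (1 - p i) else 1

/-- Maximum-likelihood aggregation of observation `φ` yields the ground truth `q`:
`q` is predicted by some model and has strictly maximal belief among predicted classes. -/
def corr {n K : ℕ} (q : Fin K) (p : Fin n → ℝ) (φ : Fin n → Fin K) : Prop :=
  (∃ i, φ i = q) ∧ ∀ d : Fin K, (∃ i, φ i = d) → d ≠ q → blf p φ d < blf p φ q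

/-- Correctness probability of the ensemble of `n` independent models. -/
noncomputable def PA {n : ℕ} (K : ℕ) (q : Fin K) (p : Fin n → ℝ) : ℝ :=
  ∑ φ : Fin n → Fin K, (∏ i, wgt K q (p i) (φ i)) * (if corr q p φ then 1 else 0)

/-! With `rᵢ = pᵢ (K - 1) / (1 - pᵢ)`, the belief of a class is the product of the `rᵢ` of the
models predicting it, and the hypotheses read `r₂, r₃ < r₁ < r₂ r₃`, which forces `r₂, r₃ > 1`.
Hence aggregation is correct exactly when model 1 is right and models 2 and 3 do not agree on a
wrong class, or model 1 is wrong and models 2 and 3 are both right. Since `wgt` is uniform on the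
wrong classes, conditioning on the predictions of models 1 and 2 in turn gives
`PA = p₁ (1 - (1 - p₂)(1 - p₃)/(K - 1)) + (1 - p₁) p₂ p₃`, and the joint-belief hypothesis is
exactly `p₁ (1 - p₂)(1 - p₃)/(K - 1) < (1 - p₁) p₂ p₃`. -/

theorem Fintype.sum_fin_succ_pi {α M : Type*} [Fintype α] [AddCommMonoid M] {n : ℕ}
    (f : (Fin (n + 1) → α) → M) : ∑ φ, f φ = ∑ a, ∑ ψ : Fin n → α, f (Fin.cons a ψ) := by
  rw [← Fintype.sum_prod_type']
  exact (Fintype.sum_equiv (Fin.consEquiv fun _ => α) _ _ fun _ => rfl).symm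

theorem Fintype.sum_fin_three_pi {α M : Type*} [Fintype α] [AddCommMonoid M]
    (f : (Fin 3 → α) → M) : ∑ φ, f φ = ∑ a, ∑ b, ∑ c, f ![a, b, c] := by
  simp only [Fintype.sum_fin_succ_pi, Fintype.sum_unique]
  rfl

section wgt

variable {K : ℕ} (q : Fin K) (p : ℝ)

@[simp]
theorem wgt_self : wgt K q p q = p := if_pos rfl

theorem wgt_of_ne {c : Fin K} (hc : c ≠ q) : wgt K q p c = (1 - p) / ((K : ℝ) - 1) := if_neg hc

theorem sum_wgt_mul_of_forall_ne (hK : 1 < K) {S : Fin K → ℝ} {s : ℝ} (hS : ∀ c ≠ q, S c = s) :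
    ∑ c, wgt K q p c * S c = p * S q + (1 - p) * s := by
  have hK' : (K : ℝ) - 1 ≠ 0 := sub_ne_zero.2 (by exact_mod_cast hK.ne')
  have hoff : ∀ c ∈ ({q}ᶜ : Finset (Fin K)), wgt K q p c * S c = (1 - p) / ((K : ℝ) - 1) * s :=
    fun c hc => by
      have hcq : c ≠ q := by simpa using hc
      rw [wgt_of_ne q p hcq, hS c hcq]
  rw [Fintype.sum_eq_add_sum_compl q, wgt_self, Finset.sum_congr rfl hoff, Finset.sum_const,
    Finset.card_compl, Finset.card_singleton, Fintype.card_fin, nsmul_eq_mul,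
    Nat.cast_sub hK.le, Nat.cast_one]
  field_simp

theorem sum_wgt (hK : 1 < K) : ∑ c, wgt K q p c = 1 := by
  simpa using sum_wgt_mul_of_forall_ne q p hK (S := 1) (s := 1) fun _ _ => rfl

theorem sum_wgt_mul_ite_eq (hK : 1 < K) (b : Fin K) :
    ∑ c, wgt K q p c * (if b = c then 0 else 1) = 1 - wgt K q p b := by
  calc ∑ c, wgt K q p c * (if b = c then 0 else 1)
      = ∑ c, (wgt K q p c - if b = c then wgt K q p c else 0) :=
        Finset.sum_congr rfl fun c _ => by split_ifs <;> ring
    _ = 1 - wgt K q p b := by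
        rw [Finset.sum_sub_distrib, sum_wgt q p hK, Finset.sum_ite_eq, if_pos (Finset.mem_univ b)]

end wgt

-- `p / ((1 - p) / (K - 1))`, the ratio of `wgt K q p` at the true class to its value at a wrong one
noncomputable def likelihoodRatio (K : ℕ) (p : ℝ) : ℝ := p * ((K : ℝ) - 1) / (1 - p)

theorem likelihoodRatio_pos {K : ℕ} (hK : 1 < K) {p : ℝ} (hp₀ : 0 < p) (hp₁ : p < 1) :
    0 < likelihoodRatio K p := by
  have : (0 : ℝ) < K - 1 := sub_pos.2 (by exact_mod_cast hK)
  have := sub_pos.2 hp₁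
  unfold likelihoodRatio
  positivity

theorem likelihoodRatio_strictMonoOn {K : ℕ} (hK : 1 < K) :
    StrictMonoOn (likelihoodRatio K) (Set.Iio 1) := by
  intro p hp p' hp' h
  have : (0 : ℝ) < K - 1 := sub_pos.2 (by exact_mod_cast hK)
  rw [likelihoodRatio, likelihoodRatio, div_lt_div_iff₀ (sub_pos.2 hp) (sub_pos.2 hp')]
  nlinarith

theorem likelihoodRatio_lt_mul_likelihoodRatio {K : ℕ} (hK : 1 < K) {p₁ p₂ p₃ : ℝ}
    (h : p₁ / (1 - p₁) < p₂ * p₃ * ((K : ℝ) - 1) / ((1 - p₂) * (1 - p₃))) :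
    likelihoodRatio K p₁ < likelihoodRatio K p₂ * likelihoodRatio K p₃ := by
  have e₁ : likelihoodRatio K p₁ = p₁ / (1 - p₁) * (K - 1) := by
    rw [likelihoodRatio]; ring
  have e₂₃ : likelihoodRatio K p₂ * likelihoodRatio K p₃ =
      p₂ * p₃ * (K - 1) / ((1 - p₂) * (1 - p₃)) * (K - 1) := by
    rw [likelihoodRatio, likelihoodRatio, div_mul_div_comm]; ring
  rw [e₁, e₂₃]
  exact mul_lt_mul_of_pos_right h (sub_pos.2 (by exact_mod_cast hK))

theorem blf_three {K : ℕ} (p₁ p₂ p₃ : ℝ) (a b c d : Fin K) :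
    blf ![p₁, p₂, p₃] ![a, b, c] d =
      (if a = d then likelihoodRatio K p₁ else 1) * (if b = d then likelihoodRatio K p₂ else 1) *
        (if c = d then likelihoodRatio K p₃ else 1) :=
  Fin.prod_univ_three _

theorem ite_mul_ite_lt {r₁ r₂ r₃ : ℝ} (h₁ : 1 < r₁) (h₂ : r₂ < r₁) (h₃ : r₃ < r₁)
    {P Q : Prop} [Decidable P] [Decidable Q] (hPQ : ¬(P ∧ Q)) :
    (if P then r₂ else 1) * (if Q then r₃ else 1) < r₁ := by
  split_ifs <;> simp_all

theorem le_mul_ite_mul_ite {r₁ r₂ r₃ : ℝ} (h₁ : 0 ≤ r₁) (h₂ : 1 ≤ r₂) (h₃ : 1 ≤ r₃)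
    (P Q : Prop) [Decidable P] [Decidable Q] :
    r₁ ≤ r₁ * (if P then r₂ else 1) * (if Q then r₃ else 1) := by
  rw [mul_assoc]
  exact le_mul_of_one_le_right h₁ <|
    one_le_mul_of_one_le_of_one_le (by split_ifs <;> linarith) (by split_ifs <;> linarith)

theorem corr_three_iff {K : ℕ} {q : Fin K} {p₁ p₂ p₃ : ℝ} (a b c : Fin K)
    (hr₃ : 0 < likelihoodRatio K p₃)
    (hr₂₁ : likelihoodRatio K p₂ < likelihoodRatio K p₁)
    (hr₃₁ : likelihoodRatio K p₃ < likelihoodRatio K p₁)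
    (hr₁ : likelihoodRatio K p₁ < likelihoodRatio K p₂ * likelihoodRatio K p₃) :
    corr q ![p₁, p₂, p₃] ![a, b, c] ↔
      a = q ∧ ¬(b = c ∧ b ≠ q) ∨ a ≠ q ∧ b = q ∧ c = q := by
  simp only [corr, blf_three, Fin.exists_fin_succ, IsEmpty.exists_iff, or_false,
    Matrix.cons_val_zero, Matrix.cons_val_succ]
  set r₁ := likelihoodRatio K p₁
  set r₂ := likelihoodRatio K p₂
  set r₃ := likelihoodRatio K p₃
  have hr₂ : 1 < r₂ := by nlinarith
  have hr₃ : 1 < r₃ := by nlinarith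
  have hr₁' : 1 < r₁ := hr₂.trans hr₂₁
  have le_blf := le_mul_ite_mul_ite (r₁ := r₁) (by linarith) hr₂.le hr₃.le
  constructor
  · rintro ⟨-, hmax⟩
    by_cases ha : a = q
    · refine .inl ⟨ha, ?_⟩
      rintro ⟨rfl, hb⟩
      have := hmax b (.inr (.inl rfl)) hb
      simp only [ha, hb, Ne.symm hb, if_true, if_false, one_mul, mul_one] at this
      linarith
    · refine .inr ⟨ha, ?_⟩
      by_contra hbc
      have := hmax a (.inl rfl) ha
      simp only [ha, if_true, if_false, one_mul] at this
      linarith [ite_mul_ite_lt hr₁' hr₂₁ hr₃₁ hbc, le_blf (b = a) (c = a)]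
  · rintro (⟨rfl, hbc⟩ | ⟨ha, rfl, rfl⟩)
    · refine ⟨.inl rfl, fun d _ hd => ?_⟩
      rw [if_neg (Ne.symm hd), if_pos rfl, one_mul]
      have hbcd : ¬(b = d ∧ c = d) := fun ⟨hb, hc⟩ => hbc ⟨hb.trans hc.symm, hb ▸ hd⟩
      exact (ite_mul_ite_lt hr₁' hr₂₁ hr₃₁ hbcd).trans_le (le_blf _ _)
    · refine ⟨.inr (.inl rfl), fun d hd hdq => ?_⟩
      obtain rfl : a = d := hd.resolve_right (by rintro (rfl | rfl) <;> exact hdq rfl)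
      simpa [ha, Ne.symm ha] using hr₁

theorem PA_three_eq_sum (K : ℕ) (q : Fin K) (p₁ p₂ p₃ : ℝ) :
    PA K q ![p₁, p₂, p₃] = ∑ a, wgt K q p₁ a * ∑ b, wgt K q p₂ b * ∑ c, wgt K q p₃ c *
      if corr q ![p₁, p₂, p₃] ![a, b, c] then 1 else 0 := by
  simp only [PA, Fintype.sum_fin_three_pi, Fin.prod_univ_three, Finset.mul_sum, mul_assoc]
  rfl

theorem PA_three_eq {K : ℕ} (hK : 1 < K) (q : Fin K) {p₁ p₂ p₃ : ℝ}
    (hr₃ : 0 < likelihoodRatio K p₃)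
    (hr₂₁ : likelihoodRatio K p₂ < likelihoodRatio K p₁)
    (hr₃₁ : likelihoodRatio K p₃ < likelihoodRatio K p₁)
    (hr₁ : likelihoodRatio K p₁ < likelihoodRatio K p₂ * likelihoodRatio K p₃) :
    PA K q ![p₁, p₂, p₃] =
      p₁ * (1 - (1 - p₂) * (1 - p₃) / ((K : ℝ) - 1)) + (1 - p₁) * (p₂ * p₃) := by
  simp only [PA_three_eq_sum, corr_three_iff _ _ _ hr₃ hr₂₁ hr₃₁ hr₁]
  rw [sum_wgt_mul_of_forall_ne q p₁ hK (s := p₂ * p₃) fun a ha => ?_]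
  · simp only [true_and, ne_eq, not_true_eq_false, false_and, or_false]
    rw [sum_wgt_mul_of_forall_ne q p₂ hK (s := 1 - (1 - p₃) / ((K : ℝ) - 1)) fun b hb => ?_]
    · simp only [not_true_eq_false, and_false, not_false_eq_true, if_true, mul_one, sum_wgt q p₃ hK]
      ring
    · simp only [hb, not_false_eq_true, and_true, ite_not]
      rw [sum_wgt_mul_ite_eq q p₃ hK, wgt_of_ne q p₃ hb]
  · simp only [ha, false_and, ne_eq, not_false_eq_true, true_and, false_or]
    rw [sum_wgt_mul_of_forall_ne q p₂ hK (s := 0) fun b hb => ?_]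
    · simp
    · simp [hb]

/-- Correctness probability of the three-model ensemble under maximum-likelihood
aggregation, when `p₁ > p₂`, `p₁ > p₃`, and the joint belief of models 2 and 3
exceeds that of model 1: `PA = p₁ - p₁(1-p₂)(1-p₃)/(K-1) + (1-p₁)p₂p₃ > p₁`. -/
theorem PA_three_models (K : ℕ) (hK : 2 ≤ K) (q : Fin K) (p₁ p₂ p₃ : ℝ)
    (h₁ : p₁ ∈ Set.Ioo (0 : ℝ) 1) (h₂ : p₂ ∈ Set.Ioo (0 : ℝ) 1)
    (h₃ : p₃ ∈ Set.Ioo (0 : ℝ) 1)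
    (h12 : p₂ < p₁) (h13 : p₃ < p₁)
    (hjoint : p₁ / (1 - p₁) < p₂ * p₃ * ((K : ℝ) - 1) / ((1 - p₂) * (1 - p₃))) :
    PA K q ![p₁, p₂, p₃]
        = p₁ - p₁ * (1 - p₂) * (1 - p₃) / ((K : ℝ) - 1) + (1 - p₁) * p₂ * p₃ ∧
      p₁ < p₁ - p₁ * (1 - p₂) * (1 - p₃) / ((K : ℝ) - 1) + (1 - p₁) * p₂ * p₃ := by
  obtain ⟨-, hp₁⟩ := h₁
  obtain ⟨-, hp₂⟩ := h₂
  obtain ⟨hp₃₀, hp₃⟩ := h₃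
  have hPA := PA_three_eq hK q (likelihoodRatio_pos hK hp₃₀ hp₃)
    (likelihoodRatio_strictMonoOn hK hp₂ hp₁ h12) (likelihoodRatio_strictMonoOn hK hp₃ hp₁ h13)
    (likelihoodRatio_lt_mul_likelihoodRatio hK hjoint)
  refine ⟨by rw [hPA]; ring, ?_⟩
  have hloss : p₁ * (1 - p₂) * (1 - p₃) / ((K : ℝ) - 1) < (1 - p₁) * p₂ * p₃ := by
    rw [div_lt_div_iff₀ (sub_pos.2 hp₁) (mul_pos (sub_pos.2 hp₂) (sub_pos.2 hp₃))] at hjoint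
    rw [div_lt_iff₀ (sub_pos.2 (by exact_mod_cast hK))]
    linarith
  linarith
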